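/- Let A _Q⊗_R B be an L-R-twisted tensor product of algebras such that Q is bijective. Then the map P : B ⊗ A → A ⊗ B defined by P = Q⁻¹ ∘ R is a twisting map between A and B, and Q : A ⊗_P B → A _Q⊗_R B is an algebra isomorphism. Hence every L-R-twisted tensor product with bijective Q is isomorphic to an ordinary twisted tensor product. -/
import Mathlib


open TensorProduct

noncomputable section

namespace LR

variable {k : Type*} [Field k]

section Toolbox

variable {X Y Z W X' Y' : Type*}
  [AddCommMonoid X] [Module k X] [AddCommMonoid Y] [Module k Y]
  [AddCommMonoid Z] [Module k Z] [AddCommMonoid W] [Module k W]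
  [AddCommMonoid X'] [Module k X'] [AddCommMonoid Y'] [Module k Y']

/-- Expand the first tensor factor using `f : X →ₗ X' ⊗ Y'`. -/
def expand (f : X →ₗ[k] X' ⊗[k] Y') : X ⊗[k] Z →ₗ[k] X' ⊗[k] (Y' ⊗[k] Z) :=
  (TensorProduct.assoc k X' Y' Z).toLinearMap ∘ₗ (TensorProduct.map f LinearMap.id)

/-- Apply `f` to the first two factors of a right-nested triple tensor. -/
def app2 (f : X ⊗[k] Y →ₗ[k] X' ⊗[k] Y') :
    X ⊗[k] (Y ⊗[k] Z) →ₗ[k] X' ⊗[k] (Y' ⊗[k] Z) :=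
  (TensorProduct.assoc k X' Y' Z).toLinearMap ∘ₗ (TensorProduct.map f LinearMap.id)
    ∘ₗ (TensorProduct.assoc k X Y Z).symm.toLinearMap

/-- Contract the first two factors of a right-nested triple tensor with `m`. -/
def con2 (m : X ⊗[k] Y →ₗ[k] W) : X ⊗[k] (Y ⊗[k] Z) →ₗ[k] W ⊗[k] Z :=
  (TensorProduct.map m LinearMap.id) ∘ₗ (TensorProduct.assoc k X Y Z).symm.toLinearMap

/-- Swap the first two factors of a right-nested triple tensor. -/
def swL : X ⊗[k] (Y ⊗[k] Z) →ₗ[k] Y ⊗[k] (X ⊗[k] Z) :=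
  (TensorProduct.assoc k Y X Z).toLinearMap
    ∘ₗ (TensorProduct.map (TensorProduct.comm k X Y).toLinearMap LinearMap.id)
    ∘ₗ (TensorProduct.assoc k X Y Z).symm.toLinearMap

/-- Exchange the second and third factors of `(X ⊗ Y) ⊗ Z`. -/
def ex23 : (X ⊗[k] Y) ⊗[k] Z →ₗ[k] (X ⊗[k] Z) ⊗[k] Y :=
  (TensorProduct.assoc k X Z Y).symm.toLinearMap
    ∘ₗ (TensorProduct.map LinearMap.id (TensorProduct.comm k Y Z).toLinearMap)
    ∘ₗ (TensorProduct.assoc k X Y Z).toLinearMap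

/-- The componentwise multiplication on a tensor product of two
(not necessarily unital) multiplications. -/
def tensMul (m₁ : X ⊗[k] X →ₗ[k] X) (m₂ : Y ⊗[k] Y →ₗ[k] Y) :
    (X ⊗[k] Y) ⊗[k] (X ⊗[k] Y) →ₗ[k] X ⊗[k] Y :=
  (TensorProduct.map m₁ m₂) ∘ₗ (tensorTensorTensorComm k X Y X Y).toLinearMap

end Toolbox

section LRPair

variable {A B : Type*} [AddCommMonoid A] [Module k A] [AddCommMonoid B] [Module k B]

/-- `x ⊗ y ↦ Σ x·a'_S ⊗ y_S` where `S(y ⊗ a') = a'_S ⊗ y_S`. -/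
def rext (mA : A ⊗[k] A →ₗ[k] A) (S : B ⊗[k] A →ₗ[k] A ⊗[k] B) (a' : A) :
    A ⊗[k] B →ₗ[k] A ⊗[k] B :=
  (TensorProduct.map mA LinearMap.id)
    ∘ₗ (TensorProduct.assoc k A A B).symm.toLinearMap
    ∘ₗ (TensorProduct.map LinearMap.id (S ∘ₗ (TensorProduct.mk k B A).flip a'))

/-- `x ⊗ y ↦ Σ x_S ⊗ b_S · y` where `S(b ⊗ x) = x_S ⊗ b_S`. -/
def lext (mB : B ⊗[k] B →ₗ[k] B) (S : B ⊗[k] A →ₗ[k] A ⊗[k] B) (b : B) :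
    A ⊗[k] B →ₗ[k] A ⊗[k] B :=
  (TensorProduct.map LinearMap.id mB)
    ∘ₗ (TensorProduct.assoc k A B B).toLinearMap
    ∘ₗ (TensorProduct.map (S ∘ₗ (TensorProduct.mk k B A) b) LinearMap.id)

/-- `x ⊗ y ↦ Σ a_S · x ⊗ y_S` where `S(a ⊗ y) = a_S ⊗ y_S`. -/
def qlext (mA : A ⊗[k] A →ₗ[k] A) (S : A ⊗[k] B →ₗ[k] A ⊗[k] B) (a : A) :
    A ⊗[k] B →ₗ[k] A ⊗[k] B :=
  (TensorProduct.map (mA ∘ₗ (TensorProduct.comm k A A).toLinearMap) LinearMap.id)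
    ∘ₗ (TensorProduct.assoc k A A B).symm.toLinearMap
    ∘ₗ (TensorProduct.map LinearMap.id (S ∘ₗ (TensorProduct.mk k A B) a))

/-- `x ⊗ y ↦ Σ x_S ⊗ y · b'_S` where `S(x ⊗ b') = x_S ⊗ b'_S`. -/
def qrext (mB : B ⊗[k] B →ₗ[k] B) (S : A ⊗[k] B →ₗ[k] A ⊗[k] B) (b' : B) :
    A ⊗[k] B →ₗ[k] A ⊗[k] B :=
  (TensorProduct.map LinearMap.id (mB ∘ₗ (TensorProduct.comm k B B).toLinearMap))
    ∘ₗ (TensorProduct.assoc k A B B).toLinearMap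
    ∘ₗ (TensorProduct.map (S ∘ₗ (TensorProduct.mk k A B).flip b') LinearMap.id)

/-- `x ⊗ y ↦ Σ y ⊗ S(x ⊗ b')`. -/
def swQ (S : A ⊗[k] B →ₗ[k] A ⊗[k] B) (b' : B) :
    A ⊗[k] B →ₗ[k] B ⊗[k] (A ⊗[k] B) :=
  (TensorProduct.map LinearMap.id S)
    ∘ₗ (TensorProduct.map LinearMap.id ((TensorProduct.mk k A B).flip b'))
    ∘ₗ (TensorProduct.comm k A B).toLinearMap

/-- `x ⊗ y ↦ Σ v ⊗ (u ⊗ y)` where `S(b ⊗ x) = u ⊗ v`. -/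
def swR (S : B ⊗[k] A →ₗ[k] A ⊗[k] B) (b : B) :
    A ⊗[k] B →ₗ[k] B ⊗[k] (A ⊗[k] B) :=
  (TensorProduct.assoc k B A B).toLinearMap
    ∘ₗ (TensorProduct.map (TensorProduct.comm k A B).toLinearMap LinearMap.id)
    ∘ₗ (TensorProduct.map (S ∘ₗ (TensorProduct.mk k B A) b) LinearMap.id)

/-- `x ⊗ y ↦ Σ x ⊗ (v ⊗ u)` where `S(a' ⊗ y) = u ⊗ v`. -/
def swQ2 (S : A ⊗[k] B →ₗ[k] A ⊗[k] B) (a' : A) :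
    A ⊗[k] B →ₗ[k] A ⊗[k] (B ⊗[k] A) :=
  TensorProduct.map LinearMap.id
    ((TensorProduct.comm k A B).toLinearMap ∘ₗ S ∘ₗ (TensorProduct.mk k A B) a')

/-- `x ⊗ y ↦ Σ u ⊗ (v ⊗ x)` where `S(y ⊗ a) = u ⊗ v`. -/
def swR2 (S : B ⊗[k] A →ₗ[k] A ⊗[k] B) (a : A) :
    A ⊗[k] B →ₗ[k] A ⊗[k] (B ⊗[k] A) :=
  (TensorProduct.assoc k A B A).toLinearMap
    ∘ₗ (TensorProduct.map (S ∘ₗ (TensorProduct.mk k B A).flip a) LinearMap.id)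
    ∘ₗ (TensorProduct.comm k A B).toLinearMap

/-- `(a ⊗ b) ⊗ (a' ⊗ b') ↦ (a ⊗ b') ⊗ (b ⊗ a')`. -/
def lrRearr : (A ⊗[k] B) ⊗[k] (A ⊗[k] B) →ₗ[k] (A ⊗[k] B) ⊗[k] (B ⊗[k] A) :=
  (tensorTensorTensorComm k A B B A).toLinearMap
    ∘ₗ (TensorProduct.map LinearMap.id (TensorProduct.comm k A B).toLinearMap)

/-- The multiplication of the L-R-twisted tensor product:
`(a ⊗ b)(a' ⊗ b') = a_Q a'_R ⊗ b_R b'_Q`. -/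
def lrMulGen (mA : A ⊗[k] A →ₗ[k] A) (mB : B ⊗[k] B →ₗ[k] B)
    (Q : A ⊗[k] B →ₗ[k] A ⊗[k] B) (R : B ⊗[k] A →ₗ[k] A ⊗[k] B) :
    (A ⊗[k] B) ⊗[k] (A ⊗[k] B) →ₗ[k] A ⊗[k] B :=
  (TensorProduct.map mA (mB ∘ₗ (TensorProduct.comm k B B).toLinearMap))
    ∘ₗ (tensorTensorTensorComm k A B A B).toLinearMap
    ∘ₗ (TensorProduct.map Q R) ∘ₗ lrRearr

/-- `R : B ⊗ A → A ⊗ B` is a twisting map (w.r.t. the given multiplications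
and units). -/
def IsTwistingMap (mA : A ⊗[k] A →ₗ[k] A) (mB : B ⊗[k] B →ₗ[k] B)
    (oneA : A) (oneB : B) (R : B ⊗[k] A →ₗ[k] A ⊗[k] B) : Prop :=
  (∀ a : A, R (oneB ⊗ₜ a) = a ⊗ₜ oneB) ∧
  (∀ b : B, R (b ⊗ₜ oneA) = oneA ⊗ₜ b) ∧
  (∀ (a a' : A) (b : B), R (b ⊗ₜ mA (a ⊗ₜ a')) = rext mA R a' (R (b ⊗ₜ a))) ∧
  (∀ (a : A) (b b' : B), R (mB (b ⊗ₜ b') ⊗ₜ a) = lext mB R b (R (b' ⊗ₜ a)))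

/-- The axioms of an L-R-twisted tensor product `A _Q⊗_R B`. -/
def IsLRPair (mA : A ⊗[k] A →ₗ[k] A) (mB : B ⊗[k] B →ₗ[k] B)
    (oneA : A) (oneB : B)
    (Q : A ⊗[k] B →ₗ[k] A ⊗[k] B) (R : B ⊗[k] A →ₗ[k] A ⊗[k] B) : Prop :=
  IsTwistingMap mA mB oneA oneB R ∧
  (∀ a : A, Q (a ⊗ₜ oneB) = a ⊗ₜ oneB) ∧
  (∀ b : B, Q (oneA ⊗ₜ b) = oneA ⊗ₜ b) ∧
  (∀ (a a' : A) (b : B), Q (mA (a ⊗ₜ a') ⊗ₜ b) = qlext mA Q a (Q (a' ⊗ₜ b))) ∧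
  (∀ (a : A) (b b' : B), Q (a ⊗ₜ mB (b ⊗ₜ b')) = qrext mB Q b' (Q (a ⊗ₜ b))) ∧
  (∀ (a : A) (b b' : B), swQ Q b' (R (b ⊗ₜ a)) = swR R b (Q (a ⊗ₜ b'))) ∧
  (∀ (a a' : A) (b : B), swQ2 Q a' (R (b ⊗ₜ a)) = swR2 R a (Q (a' ⊗ₜ b)))

end LRPair

end LR

namespace LR

section Aux

variable {k : Type*} [Field k] {A B : Type*}
  [Ring A] [Algebra k A] [Ring B] [Algebra k B]

lemma swL_tmul {X Y Z : Type*} [AddCommMonoid X] [Module k X] [AddCommMonoid Y]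
    [Module k Y] [AddCommMonoid Z] [Module k Z] (x : X) (y : Y) (z : Z) :
    (swL : X ⊗[k] (Y ⊗[k] Z) →ₗ[k] _) (x ⊗ₜ (y ⊗ₜ z)) = y ⊗ₜ (x ⊗ₜ z) := by
  simp [swL]

/-- `c ⊗ (m ⊗ n) ↦ m ⊗ c·n`. -/
def psi : B ⊗[k] (A ⊗[k] B) →ₗ[k] A ⊗[k] B :=
  (TensorProduct.map LinearMap.id (LinearMap.mul' k B)) ∘ₗ swL

/-- `e ⊗ (f ⊗ g) ↦ g·e ⊗ f`. -/
def theta : A ⊗[k] (B ⊗[k] A) →ₗ[k] A ⊗[k] B :=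
  (TensorProduct.map (LinearMap.mul' k A) LinearMap.id)
    ∘ₗ (TensorProduct.assoc k A A B).symm.toLinearMap
    ∘ₗ swL ∘ₗ (TensorProduct.map LinearMap.id (TensorProduct.comm k B A).toLinearMap)

lemma psi_tmul (c : B) (m : A) (n : B) :
    (psi : B ⊗[k] (A ⊗[k] B) →ₗ[k] _) (c ⊗ₜ (m ⊗ₜ n)) = m ⊗ₜ (c * n) := by
  simp [psi, swL_tmul]

lemma psi_apply (c : B) (z : A ⊗[k] B) :
    psi (c ⊗ₜ z) = TensorProduct.map LinearMap.id (LinearMap.mulLeft k c) z := by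
  induction z using TensorProduct.induction_on with
  | zero => simp only [tmul_zero, zero_tmul, LinearEquiv.map_zero, LinearMap.map_zero]
  | tmul m n => simp [psi_tmul]
  | add u v hu hv => simp only [tmul_add, add_tmul, LinearEquiv.map_add, LinearMap.map_add, hu, hv]

lemma theta_tmul (e : A) (f : B) (g : A) :
    (theta : A ⊗[k] (B ⊗[k] A) →ₗ[k] _) (e ⊗ₜ (f ⊗ₜ g)) = (g * e) ⊗ₜ f := by
  simp [theta, swL_tmul]

lemma rext_tmul (S : B ⊗[k] A →ₗ[k] A ⊗[k] B) (a' u : A) (v : B) :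
    rext (LinearMap.mul' k A) S a' (u ⊗ₜ v)
      = TensorProduct.map (LinearMap.mulLeft k u) LinearMap.id (S (v ⊗ₜ a')) := by
  simp only [rext, LinearMap.coe_comp, Function.comp_apply, TensorProduct.map_tmul,
    LinearMap.id_coe, id_eq, LinearMap.flip_apply, TensorProduct.mk_apply]
  generalize S (v ⊗ₜ a') = z
  induction z using TensorProduct.induction_on with
  | zero => simp only [tmul_zero, zero_tmul, LinearEquiv.map_zero, LinearMap.map_zero]
  | tmul e f => simp
  | add z w hz hw => simp only [tmul_add, add_tmul, LinearEquiv.map_add, LinearMap.map_add, hz, hw]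

lemma lext_tmul (S : B ⊗[k] A →ₗ[k] A ⊗[k] B) (b : B) (m : A) (n : B) :
    lext (LinearMap.mul' k B) S b (m ⊗ₜ n)
      = TensorProduct.map LinearMap.id (LinearMap.mulRight k n) (S (b ⊗ₜ m)) := by
  simp only [lext, LinearMap.coe_comp, Function.comp_apply, TensorProduct.map_tmul,
    LinearMap.id_coe, id_eq, TensorProduct.mk_apply]
  generalize S (b ⊗ₜ m) = z
  induction z using TensorProduct.induction_on with
  | zero => simp only [tmul_zero, zero_tmul, LinearEquiv.map_zero, LinearMap.map_zero]
  | tmul e f => simp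
  | add z w hz hw => simp only [tmul_add, add_tmul, LinearEquiv.map_add, LinearMap.map_add, hz, hw]

lemma qlext_tmul (T : A ⊗[k] B →ₗ[k] A ⊗[k] B) (a x : A) (y : B) :
    qlext (LinearMap.mul' k A) T a (x ⊗ₜ y)
      = TensorProduct.map (LinearMap.mulRight k x) LinearMap.id (T (a ⊗ₜ y)) := by
  simp only [qlext, LinearMap.coe_comp, Function.comp_apply, TensorProduct.map_tmul,
    LinearMap.id_coe, id_eq, TensorProduct.mk_apply]
  generalize T (a ⊗ₜ y) = z
  induction z using TensorProduct.induction_on with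
  | zero => simp only [tmul_zero, zero_tmul, LinearEquiv.map_zero, LinearMap.map_zero]
  | tmul e f => simp
  | add z w hz hw => simp only [tmul_add, add_tmul, LinearEquiv.map_add, LinearMap.map_add, hz, hw]

lemma qrext_tmul (T : A ⊗[k] B →ₗ[k] A ⊗[k] B) (b' : B) (x : A) (y : B) :
    qrext (LinearMap.mul' k B) T b' (x ⊗ₜ y)
      = TensorProduct.map LinearMap.id (LinearMap.mulLeft k y) (T (x ⊗ₜ b')) := by
  simp only [qrext, LinearMap.coe_comp, Function.comp_apply, TensorProduct.map_tmul,
    LinearMap.id_coe, id_eq, LinearMap.flip_apply, TensorProduct.mk_apply]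
  generalize T (x ⊗ₜ b') = z
  induction z using TensorProduct.induction_on with
  | zero => simp only [tmul_zero, zero_tmul, LinearEquiv.map_zero, LinearMap.map_zero]
  | tmul e f => simp
  | add z w hz hw => simp only [tmul_add, add_tmul, LinearEquiv.map_add, LinearMap.map_add, hz, hw]

lemma swQ_tmul (T : A ⊗[k] B →ₗ[k] A ⊗[k] B) (b' : B) (x : A) (y : B) :
    swQ T b' (x ⊗ₜ y) = y ⊗ₜ (T (x ⊗ₜ b')) := by
  simp [swQ]

lemma swR_tmul (S : B ⊗[k] A →ₗ[k] A ⊗[k] B) (b : B) (x : A) (y : B) :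
    swR S b (x ⊗ₜ y)
      = (TensorProduct.assoc k B A B)
          ((TensorProduct.map (TensorProduct.comm k A B).toLinearMap LinearMap.id)
            (S (b ⊗ₜ x) ⊗ₜ y)) := by
  simp [swR]

lemma swQ2_tmul (T : A ⊗[k] B →ₗ[k] A ⊗[k] B) (a' x : A) (y : B) :
    swQ2 T a' (x ⊗ₜ y) = x ⊗ₜ ((TensorProduct.comm k A B) (T (a' ⊗ₜ y))) := by
  simp [swQ2]

lemma swR2_tmul (S : B ⊗[k] A →ₗ[k] A ⊗[k] B) (a x : A) (y : B) :
    swR2 S a (x ⊗ₜ y) = (TensorProduct.assoc k A B A) (S (y ⊗ₜ a) ⊗ₜ x) := by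
  simp [swR2]

lemma psi_swR (S : B ⊗[k] A →ₗ[k] A ⊗[k] B) (b : B) (x : A) (y : B) :
    psi (swR S b (x ⊗ₜ y)) = lext (LinearMap.mul' k B) S b (x ⊗ₜ y) := by
  rw [swR_tmul, lext_tmul]
  generalize S (b ⊗ₜ x) = z
  induction z using TensorProduct.induction_on with
  | zero => simp only [tmul_zero, zero_tmul, LinearEquiv.map_zero, LinearMap.map_zero]
  | tmul e f => simp [psi_tmul]
  | add z w hz hw => simp only [tmul_add, add_tmul, LinearEquiv.map_add, LinearMap.map_add, hz, hw]

lemma psi_swQ (T : A ⊗[k] B →ₗ[k] A ⊗[k] B) (b' : B) (x : A) (y : B) :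
    psi (swQ T b' (x ⊗ₜ y)) = qrext (LinearMap.mul' k B) T b' (x ⊗ₜ y) := by
  rw [swQ_tmul, qrext_tmul, psi_apply]

lemma theta_swQ2 (T : A ⊗[k] B →ₗ[k] A ⊗[k] B) (a x : A) (y : B) :
    theta (swQ2 T a (x ⊗ₜ y)) = qlext (LinearMap.mul' k A) T a (x ⊗ₜ y) := by
  rw [swQ2_tmul, qlext_tmul]
  generalize T (a ⊗ₜ y) = z
  induction z using TensorProduct.induction_on with
  | zero => simp only [tmul_zero, zero_tmul, LinearEquiv.map_zero, LinearMap.map_zero]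
  | tmul e f => simp [theta_tmul]
  | add z w hz hw => simp only [tmul_add, add_tmul, LinearEquiv.map_add, LinearMap.map_add, hz, hw]

lemma theta_swR2 (S : B ⊗[k] A →ₗ[k] A ⊗[k] B) (a x : A) (y : B) :
    theta (swR2 S a (x ⊗ₜ y)) = rext (LinearMap.mul' k A) S a (x ⊗ₜ y) := by
  rw [swR2_tmul, rext_tmul]
  generalize S (y ⊗ₜ a) = z
  induction z using TensorProduct.induction_on with
  | zero => simp only [tmul_zero, zero_tmul, LinearEquiv.map_zero, LinearMap.map_zero]
  | tmul e f => simp [theta_tmul]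
  | add z w hz hw => simp only [tmul_add, add_tmul, LinearEquiv.map_add, LinearMap.map_add, hz, hw]

lemma lrMulGen_tmul (T : A ⊗[k] B →ₗ[k] A ⊗[k] B) (S : B ⊗[k] A →ₗ[k] A ⊗[k] B)
    (c a' : A) (d b' : B) :
    lrMulGen (LinearMap.mul' k A) (LinearMap.mul' k B) T S ((c ⊗ₜ d) ⊗ₜ (a' ⊗ₜ b'))
      = (TensorProduct.map (LinearMap.mul' k A)
          ((LinearMap.mul' k B) ∘ₗ (TensorProduct.comm k B B).toLinearMap))
          ((tensorTensorTensorComm k A B A B) (T (c ⊗ₜ b') ⊗ₜ S (d ⊗ₜ a'))) := by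
  simp [lrMulGen, lrRearr]

/-- structural: contracting `s ⊗ (p' ⊗ v')` through `tttComm`/`map`. -/
lemma ttt_contract (p' : A) (v' : B) (s : A ⊗[k] B) :
    (TensorProduct.map (LinearMap.mul' k A)
        ((LinearMap.mul' k B) ∘ₗ (TensorProduct.comm k B B).toLinearMap))
        ((tensorTensorTensorComm k A B A B) (s ⊗ₜ (p' ⊗ₜ v')))
      = TensorProduct.map (LinearMap.mulRight k p') (LinearMap.mulLeft k v') s := by
  induction s using TensorProduct.induction_on with
  | zero => simp only [tmul_zero, zero_tmul, LinearEquiv.map_zero, LinearMap.map_zero]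
  | tmul e f => simp [tensorTensorTensorComm_tmul]
  | add z w hz hw => simp only [tmul_add, add_tmul, LinearEquiv.map_add, LinearMap.map_add, hz, hw]

lemma map_split (f : A →ₗ[k] A) (g : B →ₗ[k] B) (s : A ⊗[k] B) :
    TensorProduct.map f g s
      = TensorProduct.map LinearMap.id g (TensorProduct.map f LinearMap.id s) := by
  induction s using TensorProduct.induction_on with
  | zero => simp only [LinearMap.map_zero]
  | tmul e f' => simp
  | add z w hz hw => simp only [LinearMap.map_add, hz, hw]

lemma ttt_contract_left (c : A) (b' : B) (r : A ⊗[k] B) :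
    (TensorProduct.map (LinearMap.mul' k A)
        ((LinearMap.mul' k B) ∘ₗ (TensorProduct.comm k B B).toLinearMap))
        ((tensorTensorTensorComm k A B A B) ((c ⊗ₜ b') ⊗ₜ r))
      = TensorProduct.map LinearMap.id (LinearMap.mulRight k b')
          (TensorProduct.map (LinearMap.mulLeft k c) LinearMap.id r) := by
  induction r using TensorProduct.induction_on with
  | zero => simp only [tmul_zero, zero_tmul, LinearEquiv.map_zero, LinearMap.map_zero]
  | tmul e f => simp [tensorTensorTensorComm_tmul]
  | add z w hz hw =>
      simp only [tmul_add, add_tmul, LinearEquiv.map_add, LinearMap.map_add, hz, hw]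

lemma psi_swQ_map (T : A ⊗[k] B →ₗ[k] A ⊗[k] B) (b' : B) :
    psi ∘ₗ swQ T b' = qrext (LinearMap.mul' k B) T b' :=
  TensorProduct.ext' fun x y => by
    simpa using psi_swQ T b' x y

lemma psi_swR_map (S : B ⊗[k] A →ₗ[k] A ⊗[k] B) (b : B) :
    psi ∘ₗ swR S b = lext (LinearMap.mul' k B) S b :=
  TensorProduct.ext' fun x y => by
    simpa using psi_swR S b x y

lemma theta_swQ2_map (T : A ⊗[k] B →ₗ[k] A ⊗[k] B) (a : A) :
    theta ∘ₗ swQ2 T a = qlext (LinearMap.mul' k A) T a :=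
  TensorProduct.ext' fun x y => by
    simpa using theta_swQ2 T a x y

lemma theta_swR2_map (S : B ⊗[k] A →ₗ[k] A ⊗[k] B) (a : A) :
    theta ∘ₗ swR2 S a = rext (LinearMap.mul' k A) S a :=
  TensorProduct.ext' fun x y => by
    simpa using theta_swR2 S a x y

end Aux


/-- If `A _Q⊗_R B` is an L-R-twisted tensor product with `Q` bijective
(with linear inverse `Qinv`), then `P = Q⁻¹ ∘ R` is a twisting map and
`Q : A ⊗_P B → A _Q⊗_R B` is an algebra isomorphism. -/
theorem lr_twisted_tensor_product_bijective_Q_iso_twisted_tensor_product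
    {k : Type*} [Field k] {A B : Type*}
    [Ring A] [Algebra k A] [Ring B] [Algebra k B]
    (Q Qinv : A ⊗[k] B →ₗ[k] A ⊗[k] B) (R : B ⊗[k] A →ₗ[k] A ⊗[k] B)
    (h : IsLRPair (LinearMap.mul' k A) (LinearMap.mul' k B) (1 : A) (1 : B) Q R)
    (hQl : Qinv ∘ₗ Q = LinearMap.id) (hQr : Q ∘ₗ Qinv = LinearMap.id) :
    IsTwistingMap (LinearMap.mul' k A) (LinearMap.mul' k B) (1 : A) (1 : B)
      (Qinv ∘ₗ R) ∧
    Function.Bijective Q ∧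
    Q ((1 : A) ⊗ₜ[k] (1 : B)) = (1 : A) ⊗ₜ[k] (1 : B) ∧
    (∀ x y : A ⊗[k] B,
      Q (lrMulGen (LinearMap.mul' k A) (LinearMap.mul' k B) LinearMap.id
          (Qinv ∘ₗ R) (x ⊗ₜ[k] y)) =
        lrMulGen (LinearMap.mul' k A) (LinearMap.mul' k B) Q R (Q x ⊗ₜ[k] Q y)) := by
  obtain ⟨⟨hR1, hR2, hR3, hR4⟩, hQ1, hQ2, hql, hqr, hC1, hC2⟩ := h
  have hQinv : ∀ z : A ⊗[k] B, Qinv (Q z) = z := fun z => by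
    simpa using LinearMap.congr_fun hQl z
  have hQQinv : ∀ z : A ⊗[k] B, Q (Qinv z) = z := fun z => by
    simpa using LinearMap.congr_fun hQr z
  have hQP : ∀ w : B ⊗[k] A, Q ((Qinv ∘ₗ R) w) = R w := fun w => by
    simp only [LinearMap.comp_apply]; exact hQQinv (R w)
  have hinj : Function.Injective Q := fun z z' hzz => by
    have := congrArg Qinv hzz; simpa only [hQinv] using this
  -- map-level forms of the Q-axioms
  have hqlmap : ∀ (c : A) (z : A ⊗[k] B),
      Q (TensorProduct.map (LinearMap.mulLeft k c) LinearMap.id z)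
        = qlext (LinearMap.mul' k A) Q c (Q z) := by
    intro c z
    induction z using TensorProduct.induction_on with
    | zero => simp only [LinearMap.map_zero]
    | tmul e f => simpa using hql c e f
    | add z w hz hw => simp only [LinearMap.map_add, hz, hw]
  have hqrmap : ∀ (b' : B) (z : A ⊗[k] B),
      Q (TensorProduct.map LinearMap.id (LinearMap.mulRight k b') z)
        = qrext (LinearMap.mul' k B) Q b' (Q z) := by
    intro b' z
    induction z using TensorProduct.induction_on with
    | zero => simp only [LinearMap.map_zero]
    | tmul e f => simpa using hqr e f b'
    | add z w hz hw => simp only [LinearMap.map_add, hz, hw]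
  -- compatibility consequences
  have hC1' : ∀ (a : A) (b b' : B),
      qrext (LinearMap.mul' k B) Q b' (R (b ⊗ₜ a))
        = lext (LinearMap.mul' k B) R b (Q (a ⊗ₜ b')) := by
    intro a b b'
    have e1 := LinearMap.congr_fun (psi_swQ_map Q b') (R (b ⊗ₜ a))
    have e2 := LinearMap.congr_fun (psi_swR_map R b) (Q (a ⊗ₜ b'))
    simp only [LinearMap.comp_apply] at e1 e2
    rw [← e1, ← e2, hC1 a b b']
  have hC2'' : ∀ (c : A) (d : B) (a' : A),
      qlext (LinearMap.mul' k A) Q c (R (d ⊗ₜ a'))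
        = rext (LinearMap.mul' k A) R a' (Q (c ⊗ₜ d)) := by
    intro c d a'
    have e1 := LinearMap.congr_fun (theta_swQ2_map Q c) (R (d ⊗ₜ a'))
    have e2 := LinearMap.congr_fun (theta_swR2_map R a') (Q (c ⊗ₜ d))
    simp only [LinearMap.comp_apply] at e1 e2
    rw [← e1, ← e2, hC2 a' c d]
  -- intertwining lemmas
  have L2 : ∀ (a' : A) (z : A ⊗[k] B),
      Q (rext (LinearMap.mul' k A) (Qinv ∘ₗ R) a' z)
        = rext (LinearMap.mul' k A) R a' (Q z) := by
    intro a' z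
    induction z using TensorProduct.induction_on with
    | zero => simp only [LinearMap.map_zero]
    | tmul c d => rw [rext_tmul, hqlmap, hQP, hC2'']
    | add z w hz hw => simp only [LinearMap.map_add, hz, hw]
  have L4 : ∀ (b : B) (z : A ⊗[k] B),
      Q (lext (LinearMap.mul' k B) (Qinv ∘ₗ R) b z)
        = lext (LinearMap.mul' k B) R b (Q z) := by
    intro b z
    induction z using TensorProduct.induction_on with
    | zero => simp only [LinearMap.map_zero]
    | tmul m n => rw [lext_tmul, hqrmap, hQP, hC1']
    | add z w hz hw => simp only [LinearMap.map_add, hz, hw]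
  refine ⟨⟨?_, ?_, ?_, ?_⟩, ⟨hinj, fun z => ⟨Qinv z, hQQinv z⟩⟩, hQ1 1, ?_⟩
  · intro a
    simp only [LinearMap.comp_apply, hR1 a]
    calc Qinv (a ⊗ₜ (1 : B)) = Qinv (Q (a ⊗ₜ (1 : B))) := by rw [hQ1]
      _ = a ⊗ₜ (1 : B) := hQinv _
  · intro b
    simp only [LinearMap.comp_apply, hR2 b]
    calc Qinv ((1 : A) ⊗ₜ b) = Qinv (Q ((1 : A) ⊗ₜ b)) := by rw [hQ2]
      _ = (1 : A) ⊗ₜ b := hQinv _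
  · intro a a' b
    apply hinj
    rw [hQP, hR3 a a' b, L2, hQP]
  · intro a b b'
    apply hinj
    rw [hQP, hR4 a b b', L4, hQP]
  · intro x y
    induction y using TensorProduct.induction_on with
    | zero => simp only [tmul_zero, LinearMap.map_zero]
    | add y y' hy hy' => simp only [tmul_add, LinearMap.map_add, hy, hy']
    | tmul a' b' =>
      have s1 : lrMulGen (LinearMap.mul' k A) (LinearMap.mul' k B) LinearMap.id
            (Qinv ∘ₗ R) (x ⊗ₜ (a' ⊗ₜ b'))
          = TensorProduct.map LinearMap.id (LinearMap.mulRight k b')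
              (rext (LinearMap.mul' k A) (Qinv ∘ₗ R) a' x) := by
        induction x using TensorProduct.induction_on with
        | zero => simp only [zero_tmul, LinearMap.map_zero]
        | tmul c d =>
            rw [lrMulGen_tmul, rext_tmul]
            simp only [LinearMap.id_coe, id_eq]
            exact ttt_contract_left c b' ((Qinv ∘ₗ R) (d ⊗ₜ a'))
        | add z w hz hw =>
            simp only [add_tmul, LinearMap.map_add, hz, hw]
      have l3 : ∀ z : A ⊗[k] B,
          qrext (LinearMap.mul' k B) Q b' (rext (LinearMap.mul' k A) R a' z)
            = lrMulGen (LinearMap.mul' k A) (LinearMap.mul' k B) Q R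
                (z ⊗ₜ Q (a' ⊗ₜ b')) := by
        intro z
        induction z using TensorProduct.induction_on with
        | zero => simp only [LinearMap.map_zero, zero_tmul]
        | add z w hz hw => simp only [LinearMap.map_add, add_tmul, hz, hw]
        | tmul u v =>
          have ca : ∀ w : A ⊗[k] B,
              qrext (LinearMap.mul' k B) Q b'
                  (TensorProduct.map (LinearMap.mulLeft k u) LinearMap.id w)
                = psi (TensorProduct.map LinearMap.id
                    (qlext (LinearMap.mul' k A) Q u) (swQ Q b' w)) := by
            intro w
            induction w using TensorProduct.induction_on with
            | zero => simp only [LinearMap.map_zero]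
            | add z' w' hz hw => simp only [LinearMap.map_add, hz, hw]
            | tmul e c0 =>
                have hqle : Q ((u * e) ⊗ₜ b')
                    = qlext (LinearMap.mul' k A) Q u (Q (e ⊗ₜ b')) := by
                  simpa using hql u e b'
                rw [swQ_tmul]
                simp only [TensorProduct.map_tmul, LinearMap.mulLeft_apply,
                  LinearMap.id_coe, id_eq]
                rw [qrext_tmul, hqle, psi_apply]
          have cb : ∀ t : A ⊗[k] B,
              lrMulGen (LinearMap.mul' k A) (LinearMap.mul' k B) Q R
                  ((u ⊗ₜ v) ⊗ₜ t)
                = psi (TensorProduct.map LinearMap.id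
                    (qlext (LinearMap.mul' k A) Q u) (swR R v t)) := by
            intro t
            induction t using TensorProduct.induction_on with
            | zero => simp only [tmul_zero, LinearMap.map_zero]
            | add z' w' hz hw => simp only [tmul_add, LinearMap.map_add, hz, hw]
            | tmul p q =>
                rw [lrMulGen_tmul, swR_tmul]
                generalize R (v ⊗ₜ p) = r
                induction r using TensorProduct.induction_on with
                | zero =>
                    simp only [tmul_zero, zero_tmul, LinearEquiv.map_zero,
                      LinearMap.map_zero]
                | add z' w' hz hw =>
                    simp only [tmul_add, add_tmul, LinearEquiv.map_add,
                      LinearMap.map_add, hz, hw]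
                | tmul p' v' =>
                    rw [ttt_contract (p' : A) v' (Q (u ⊗ₜ q))]
                    simp only [TensorProduct.map_tmul, LinearEquiv.coe_coe,
                      TensorProduct.comm_tmul, LinearMap.id_coe, id_eq,
                      TensorProduct.assoc_tmul]
                    rw [qlext_tmul, psi_apply, ← map_split]
          rw [rext_tmul, ca, hC1 a' v b', cb]
      rw [s1, hqrmap, L2, l3]

end LR
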